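/- Let M ∈ ℝ^{n×n} and P ∈ 𝕊^n positive definite such that [[−rP, MP],[P Mᵀ, −rP]] ≺ 0 for some r > 0. Then every eigenvalue λ of M satisfies |λ| < r. -/

import Mathlib

/-!
Let `μ` be an eigenvalue of `M`, and `u ≠ 0` an eigenvector of `Mᴴ` for `conj μ`, so that
`uᴴ M = μ uᴴ`. Evaluating the positive definite form `-[[-rP, MP], [PMᴴ, -rP]]` at
`(x u, y u)` only involves `p = uᴴ P u > 0`; at `(1, 0)` it gives `r p > 0`, and at
`(r, conj μ)` it gives `r (r² - |μ|²) p > 0`, whence `|μ| < r`. The real statement follows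
by complexifying, which preserves positive definiteness since a real positive definite
matrix is `Bᴴ B` with `B` invertible.
-/

open Matrix
open scoped ComplexOrder MatrixOrder

namespace Matrix

variable {m n 𝕜 : Type*} [Fintype m] [Fintype n] [RCLike 𝕜]

theorem PosDef.map_ofReal {N : Matrix m m ℝ} (hN : N.PosDef) :
    (N.map (Complex.ofReal ·)).PosDef := by
  classical
  obtain ⟨B, hB, rfl⟩ :=
    CStarAlgebra.isStrictlyPositive_iff_eq_star_mul_self.mp hN.isStrictlyPositive
  have hBc : IsUnit (B.map (Complex.ofReal ·)) := hB.map Complex.ofRealHom.mapMatrix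
  have h : (star B * B).map (Complex.ofReal ·) =
      (B.map (Complex.ofReal ·))ᴴ * B.map (Complex.ofReal ·) := by
    rw [← conjTranspose_map _ fun _ => (Complex.conj_ofReal _).symm]
    exact Matrix.map_mul (f := Complex.ofRealHom)
  exact h ▸ .conjTranspose_mul_self _ (mulVec_injective_iff_isUnit.mpr hBc)

theorem exists_conjTranspose_mulVec_eq_star_smul_of_mem_spectrum [DecidableEq n]
    {M : Matrix n n 𝕜} {μ : 𝕜} (hμ : μ ∈ spectrum 𝕜 M) : ∃ u ≠ 0, Mᴴ *ᵥ u = star μ • u := by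
  have : star μ ∈ spectrum 𝕜 Mᴴ := by
    rw [← star_eq_conjTranspose, spectrum.map_star]
    simpa using hμ
  rw [← spectrum_toLin', ← Module.End.hasEigenvalue_iff_mem_spectrum] at this
  obtain ⟨u, hu⟩ := this.exists_hasEigenvector
  exact ⟨u, hu.2, by simpa using hu.apply_eq_smul⟩

def diskLMI (r : ℝ) (M P : Matrix n n 𝕜) : Matrix (n ⊕ n) (n ⊕ n) 𝕜 :=
  fromBlocks (-(r • P)) (M * P) (P * Mᴴ) (-(r • P))

theorem diskLMI_map_ofReal (r : ℝ) (M P : Matrix n n ℝ) :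
    (diskLMI r M P).map (Complex.ofReal ·) =
      diskLMI r (M.map (Complex.ofReal ·)) (P.map (Complex.ofReal ·)) := by
  ext (i | i) (j | j) <;> simp [diskLMI, mul_apply]

theorem star_dotProduct_neg_diskLMI_mulVec (r : ℝ) {M P : Matrix n n 𝕜} {u : n → 𝕜} {μ : 𝕜}
    (hu : Mᴴ *ᵥ u = star μ • u) (x y : 𝕜) :
    star (Sum.elim (x • u) (y • u)) ⬝ᵥ (-diskLMI r M P) *ᵥ Sum.elim (x • u) (y • u) =
      (r * (star x * x + star y * y) - star x * y * μ - star y * x * star μ) *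
        (star u ⬝ᵥ P *ᵥ u) := by
  have hu' : star u ᵥ* M = μ • star u := by
    simpa [star_mulVec] using congrArg star hu
  rw [diskLMI, fromBlocks_neg, fromBlocks_mulVec, Function.star_sumElim,
    sumElim_dotProduct_sumElim]
  simp only [Sum.elim_comp_inl, Sum.elim_comp_inr, neg_neg, ← mulVec_mulVec, hu, neg_mulVec,
    smul_mulVec, mulVec_smul, star_smul, dotProduct_add, dotProduct_neg, dotProduct_smul,
    smul_dotProduct, dotProduct_mulVec, hu', smul_vecMul, smul_eq_mul,
    RCLike.real_smul_eq_coe_mul]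
  ring

theorem norm_lt_of_mem_spectrum_of_posDef_neg_diskLMI [DecidableEq n] {r : ℝ}
    {M P : Matrix n n 𝕜} (hP : P.PosDef) (hLMI : (-diskLMI r M P).PosDef)
    {μ : 𝕜} (hμ : μ ∈ spectrum 𝕜 M) : ‖μ‖ < r := by
  obtain ⟨u, hu0, hu⟩ := exists_conjTranspose_mulVec_eq_star_smul_of_mem_spectrum hμ
  obtain ⟨p, hp, hpu⟩ := RCLike.pos_iff_exists_ofReal.mp (hP.dotProduct_mulVec_pos hu0)
  have hpos (x y : 𝕜) (hx : x ≠ 0) :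
      0 < (r * (star x * x + star y * y) - star x * y * μ - star y * x * star μ) * p := by
    have hz : Sum.elim (x • u) (y • u) ≠ 0 := fun h =>
      hu0 <| (smul_eq_zero.mp (funext fun i => congrFun h (Sum.inl i))).resolve_left hx
    simpa only [star_dotProduct_neg_diskLMI_mulVec r hu, ← hpu] using
      hLMI.dotProduct_mulVec_pos hz
  have hr : 0 < r := by
    refine pos_of_mul_pos_left (b := p) ?_ hp.le
    rw [← RCLike.ofReal_pos (K := 𝕜)]
    simpa using hpos 1 0 one_ne_zero
  have hdisk : 0 < r * (r ^ 2 - ‖μ‖ ^ 2) * p := by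
    rw [← RCLike.ofReal_pos (K := 𝕜)]
    convert hpos r (star μ) (RCLike.ofReal_ne_zero.mpr hr.ne') using 1
    simp only [RCLike.star_def, RCLike.conj_ofReal, RCLike.conj_conj]
    push_cast
    rw [← RCLike.mul_conj]
    ring
  have hsq : 0 < r ^ 2 - ‖μ‖ ^ 2 :=
    pos_of_mul_pos_right (pos_of_mul_pos_left hdisk hp.le) hr.le
  exact lt_of_pow_lt_pow_left₀ 2 hr.le (by linarith)

end Matrix

theorem stmt_14_general {n : ℕ} (r : ℝ)
    (M : Matrix (Fin n) (Fin n) ℝ) (P : Matrix (Fin n) (Fin n) ℝ)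
    (hP : P.PosDef)
    (hLMI : (-(Matrix.fromBlocks (-(r • P)) (M * P) (P * Mᵀ) (-(r • P)))).PosDef) :
    ∀ lam : ℂ, lam ∈ spectrum ℂ (M.map (Complex.ofReal ·)) →
      ‖lam‖ < r := by
  intro lam hlam
  have hLMIc := PosDef.map_ofReal (N := -diskLMI r M P) hLMI
  rw [Matrix.map_neg _ Complex.ofReal_neg, diskLMI_map_ofReal] at hLMIc
  exact norm_lt_of_mem_spectrum_of_posDef_neg_diskLMI (PosDef.map_ofReal hP) hLMIc hlam

theorem stmt_14 {n : ℕ} (r : ℝ) (hr : 0 < r)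
    (M : Matrix (Fin n) (Fin n) ℝ) (P : Matrix (Fin n) (Fin n) ℝ)
    (hP : P.PosDef)
    (hLMI : (-(Matrix.fromBlocks (-(r • P)) (M * P) (P * Mᵀ) (-(r • P)))).PosDef) :
    ∀ lam : ℂ, lam ∈ spectrum ℂ (M.map (Complex.ofReal ·)) →
      ‖lam‖ < r :=
  stmt_14_general r M P hP hLMI
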